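/- arXiv:2310.15207 — 2 statements merged into one kernel-verified Lean document; each statement's English description precedes it below -/
import Mathlib

section
/- Let n ≡ 1 (mod 4) be an integer greater than 1 and let r, s be positive integers with r > s. Then [n]_q · (q^3;q^4)_{(n^r-1)/2} (q^{5n};q^{4n})_{(n^{r-1}-1)/2} / ((q^5;q^4)_{(n^r-1)/2} (q^{3n};q^{4n})_{(n^{r-1}-1)/2}) ≡ [n]_q · (q^3;q^4)_{(n^s-1)/2} (q^{5n};q^{4n})_{(n^{s-1}-1)/2} / ((q^5;q^4)_{(n^s-1)/2} (q^{3n};q^{4n})_{(n^{s-1}-1)/2}) modulo Φ_{n^s}(q). -/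
open Finset Polynomial

/-!
Let `N = n^s = n d` and `K = (n^{r-s} - 1)/2`, so that the lengths at level `r` are those at
level `s` plus `K N` (resp. `K d`). Hence the level-`r` expression is the level-`s` one times four
tail products. In the tails, the factors `1 - q^{N(c+4u)}` (`c = 3, 5`), which vanish at a
primitive `N`-th root of unity `ζ`, occur once in the numerator and once in the denominator and
cancel. Of the remaining factors, the `(q³;q⁴)`- and `(q⁵;q⁴)`-tails agree at `ζ`, since on blocks of
`N` consecutive indices a shift by `(N-1)/2` turns `5 + 4i` into `3 + 4i` modulo `N`; likewise the
`(q³ⁿ;q⁴ⁿ)`- and `(q⁵ⁿ;q⁴ⁿ)`-tails modulo `d`. So the level-`r` expression is the level-`s` one times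
`U/V` with `U(ζ) = V(ζ) ≠ 0`. The level-`s` expression is regular at `ζ`: its only vanishing
factors, `1 - q^N` from `(1 - qⁿ)(q⁵ⁿ;q⁴ⁿ)` and from `(1 - q)(q⁵;q⁴)`, cancel.
-/

/-- The q-shifted factorial `(a;Q)_k` in `ℚ(q)`. -/
noncomputable def poch (a Q : RatFunc ℚ) (k : ℕ) : RatFunc ℚ :=
  ∏ i ∈ Finset.range k, (1 - a * Q ^ i)

/-- The q-integer `[n]_q`. -/
noncomputable def qint (n : ℕ) : RatFunc ℚ :=
  (1 - RatFunc.X ^ n) / (1 - RatFunc.X)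

theorem Function.Periodic.prod_Ico_add_eq_prod_range {M : Type*} [CommMonoid M] {f : ℕ → M}
    {d : ℕ} (hf : Function.Periodic f d) (A : ℕ) :
    ∏ i ∈ Ico A (A + d), f i = ∏ i ∈ range d, f i := by
  induction A with
  | zero => rw [zero_add, range_eq_Ico]
  | succ A ih =>
    rcases d.eq_zero_or_pos with rfl | hd
    · simp
    rw [← ih, prod_eq_prod_Ico_succ_bot (show A < A + d by omega),
      show A + 1 + d = A + d + 1 by omega, prod_Ico_succ_top (show A + 1 ≤ A + d by omega), hf A,
      mul_comm]

theorem Function.Periodic.prod_Ico_add_mul_eq_pow {M : Type*} [CommMonoid M] {f : ℕ → M}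
    {d : ℕ} (hf : Function.Periodic f d) (A K : ℕ) :
    ∏ i ∈ Ico A (A + K * d), f i = (∏ i ∈ range d, f i) ^ K := by
  induction K with
  | zero => simp
  | succ K ih =>
    rw [add_mul, one_mul, ← add_assoc,
      ← prod_Ico_consecutive f (n := A + K * d) (by omega) (by omega), ih,
      hf.prod_Ico_add_eq_prod_range, pow_succ]

theorem prod_filter_Ico_three_eq_five {R : Type*} [CommRing R] {ω : R} {d A : ℕ}
    (hω : ω ^ d = 1) (hd : d = 2 * A + 1) (K : ℕ) :
    ∏ i ∈ (Ico A (A + K * d)).filter (fun i => ¬ d ∣ 3 + 4 * i), (1 - ω ^ (3 + 4 * i)) =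
      ∏ i ∈ (Ico A (A + K * d)).filter (fun i => ¬ d ∣ 5 + 4 * i), (1 - ω ^ (5 + 4 * i)) := by
  have hω' : ∀ x k, ω ^ (x + d * k) = ω ^ x := by simp [pow_add, pow_mul, hω]
  set f : ℕ → ℕ → R := fun c i => if ¬ d ∣ c + 4 * i then 1 - ω ^ (c + 4 * i) else 1
  have hf : ∀ c, Function.Periodic (f c) d := fun c i => by
    simp only [f, show c + 4 * (i + d) = c + 4 * i + d * 4 by ring,
      Nat.dvd_add_left (dvd_mul_right d 4), hω']
  -- shifting the index by `A` turns the exponent `5 + 4i` into `3 + 4i` modulo `d`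
  have hshift : ∀ i, f 5 (A + i) = f 3 i := fun i => by
    simp only [f, show 5 + 4 * (A + i) = 3 + 4 * i + d * 2 by omega,
      Nat.dvd_add_left (dvd_mul_right d 2), hω']
  simp only [prod_filter]
  change ∏ i ∈ _, f 3 i = ∏ i ∈ _, f 5 i
  rw [(hf 3).prod_Ico_add_mul_eq_pow, (hf 5).prod_Ico_add_mul_eq_pow,
    ← (hf 5).prod_Ico_add_eq_prod_range A, prod_Ico_eq_prod_range, add_tsub_cancel_left]
  simp only [hshift]

theorem cyclotomic_dvd_iff_aeval_eq_zero {K : Type*} [Field K] [CharZero K] {ζ : K} {N : ℕ}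
    (hζ : IsPrimitiveRoot ζ N) (hN : 0 < N) {p : ℚ[X]} :
    cyclotomic N ℚ ∣ p ↔ aeval ζ p = 0 := by
  rw [cyclotomic_eq_minpoly_rat hζ hN, minpoly.dvd_iff]

theorem cyclotomic_dvd_one_sub_X_pow_iff {N m : ℕ} (hN : 0 < N) :
    cyclotomic N ℚ ∣ 1 - X ^ m ↔ N ∣ m := by
  have hζ := Complex.isPrimitiveRoot_exp N hN.ne'
  rw [cyclotomic_dvd_iff_aeval_eq_zero hζ hN, map_sub, map_one, map_pow, aeval_X, sub_eq_zero,
    eq_comm, hζ.pow_eq_one_iff_dvd]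

theorem one_sub_X_pow_ne_zero {R : Type*} [CommRing R] [Nontrivial R] {m : ℕ} (hm : 0 < m) :
    (1 - X ^ m : R[X]) ≠ 0 := by
  rw [← neg_sub, neg_ne_zero, ← C_1]
  exact X_pow_sub_C_ne_zero hm 1

/-- `qfac c e (range k)` is `(q^{ce}; q^{4e})_k` as a polynomial. -/
noncomputable def qfac (c e : ℕ) (S : Finset ℕ) : ℚ[X] :=
  ∏ i ∈ S, (1 - X ^ (e * (c + 4 * i)))

theorem poch_X_pow_eq_qfac (c e k : ℕ) :
    poch (RatFunc.X ^ (c * e)) (RatFunc.X ^ (4 * e)) k =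
      algebraMap ℚ[X] (RatFunc ℚ) (qfac c e (range k)) := by
  simp only [poch, qfac, map_prod, map_sub, map_one, map_pow, RatFunc.algebraMap_X, ← pow_mul,
    ← pow_add]
  refine prod_congr rfl fun i _ => ?_
  ring_nf

theorem aeval_qfac {A : Type*} [CommRing A] [Algebra ℚ A] (x : A) (c e : ℕ) (S : Finset ℕ) :
    aeval x (qfac c e S) = ∏ i ∈ S, (1 - (x ^ e) ^ (c + 4 * i)) := by
  simp [qfac, pow_mul]

theorem cyclotomic_dvd_qfac_iff {N c e : ℕ} (hN : 0 < N) {S : Finset ℕ} :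
    cyclotomic N ℚ ∣ qfac c e S ↔ ∃ i ∈ S, N ∣ e * (c + 4 * i) := by
  simp only [qfac, (cyclotomic.irreducible_rat hN).prime.dvd_finsetProd_iff,
    cyclotomic_dvd_one_sub_X_pow_iff hN]

theorem qfac_range_add (c e m l : ℕ) :
    qfac c e (range (m + l)) = qfac c e (range m) * qfac c e (Ico m (m + l)) :=
  (prod_range_mul_prod_Ico _ (Nat.le_add_right m l)).symm

theorem one_sub_X_pow_mul_qfac_five (e k : ℕ) :
    (1 - X ^ e) * qfac 5 e (range k) = qfac 1 e (range (k + 1)) := by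
  rw [qfac, qfac, prod_range_succ', mul_comm]
  congr 1
  · exact prod_congr rfl fun i _ => by ring_nf
  · simp

theorem qfac_one_eq_mul_erase {b d e : ℕ} (hd : d = 4 * b + 1) :
    qfac 1 e (range (2 * b + 1)) =
      (1 - X ^ (e * d)) * qfac 1 e ((range (2 * b + 1)).erase b) := by
  rw [qfac, qfac, ← mul_prod_erase _ _ (mem_range.2 (by omega : b < 2 * b + 1)), hd, add_comm 1]

/-- For `N = e d`, these are the factors of `qfac c e (Ico A (A + K d))` that do not vanish at a
primitive `N`-th root of unity. -/
noncomputable def qtail (c e d A K : ℕ) : ℚ[X] :=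
  qfac c e ((Ico A (A + K * d)).filter fun i => ¬ d ∣ c + 4 * i)

theorem filter_dvd_Ico_eq_image {a c d K : ℕ} (hd : d = 4 * a + 1) (hc : 2 ≤ c) (hc' : c ≤ 5) :
    (Ico (2 * a) (2 * a + K * d)).filter (fun i => d ∣ c + 4 * i) =
      (range K).image (fun u => c * a + u * d) := by
  ext i
  simp only [mem_filter, mem_Ico, mem_image, mem_range]
  constructor
  · rintro ⟨⟨hi, hi'⟩, t, ht⟩
    -- `t ≡ c (mod 4)` because `d ≡ 1 (mod 4)`
    have htc : t % 4 = c % 4 := by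
      have : t + 4 * (a * t) = c + 4 * i := by rw [ht, hd]; ring
      omega
    have ht2 : 2 ≤ t := by
      by_contra! h
      interval_cases t <;> omega
    have htK : t < c + 4 * K := by
      by_contra! h
      have := Nat.mul_le_mul_left d h
      subst hd
      nlinarith
    refine ⟨(t - c) / 4, by omega, ?_⟩
    have hu : t = c + 4 * ((t - c) / 4) := by omega
    rw [hu, hd] at ht
    nlinarith
  · rintro ⟨u, hu, rfl⟩
    refine ⟨⟨by nlinarith, by nlinarith⟩, c + 4 * u, by rw [hd]; ring⟩

theorem qfac_Ico_eq_mul {a c d e N K : ℕ} (hd : d = 4 * a + 1) (hN : e * d = N) (hc : 2 ≤ c)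
    (hc' : c ≤ 5) :
    qfac c e (Ico (2 * a) (2 * a + K * d)) =
      (∏ u ∈ range K, (1 - X ^ (N * (c + 4 * u)))) * qtail c e d (2 * a) K := by
  have hinj : Set.InjOn (fun u => c * a + u * d) (range K) := fun u _ v _ h => by
    simpa [hd] using h
  rw [qtail, qfac, qfac, ← prod_filter_mul_prod_filter_not _ (fun i => d ∣ c + 4 * i),
    filter_dvd_Ico_eq_image hd hc hc', prod_image hinj]
  congr 1
  refine prod_congr rfl fun u _ => ?_
  rw [← hN, hd]
  ring_nf

theorem cyclotomic_not_dvd_qtail {c e d N A K : ℕ} (hN : e * d = N) (hN0 : 0 < N) :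
    ¬ cyclotomic N ℚ ∣ qtail c e d A K := by
  rw [qtail, cyclotomic_dvd_qfac_iff hN0]
  rintro ⟨i, hi, hdvd⟩
  rw [← hN, Nat.mul_dvd_mul_iff_left (Nat.pos_of_mul_pos_right (hN ▸ hN0))] at hdvd
  exact (mem_filter.1 hi).2 hdvd

theorem aeval_qtail_three_eq_five {A : Type*} [CommRing A] [Algebra ℚ A] {x : A} {e d B : ℕ}
    (hx : (x ^ e) ^ d = 1) (hd : d = 2 * B + 1) (K : ℕ) :
    aeval x (qtail 3 e d B K) = aeval x (qtail 5 e d B K) := by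
  rw [qtail, qtail, aeval_qfac, aeval_qfac, prod_filter_Ico_three_eq_five hx hd]

noncomputable def pochRatio (n M m : ℕ) : RatFunc ℚ :=
  qint n * poch (RatFunc.X ^ 3) (RatFunc.X ^ 4) M
      * poch (RatFunc.X ^ (5 * n)) (RatFunc.X ^ (4 * n)) m
    / (poch (RatFunc.X ^ 5) (RatFunc.X ^ 4) M
      * poch (RatFunc.X ^ (3 * n)) (RatFunc.X ^ (4 * n)) m)

theorem pochRatio_eq (n M m : ℕ) :
    pochRatio n M m =
      algebraMap ℚ[X] (RatFunc ℚ) ((1 - X ^ n) * qfac 3 1 (range M) * qfac 5 n (range m)) /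
        algebraMap ℚ[X] (RatFunc ℚ) ((1 - X) * (qfac 5 1 (range M) * qfac 3 n (range m))) := by
  have hpoch : ∀ c k, poch (RatFunc.X ^ c) (RatFunc.X ^ 4) k =
      algebraMap ℚ[X] (RatFunc ℚ) (qfac c 1 (range k)) := fun c k => by
    simpa using poch_X_pow_eq_qfac c 1 k
  have hqint : qint n =
      algebraMap ℚ[X] (RatFunc ℚ) (1 - X ^ n) / algebraMap ℚ[X] (RatFunc ℚ) (1 - X) := by
    simp [qint]
  rw [pochRatio, hqint, hpoch, hpoch, poch_X_pow_eq_qfac, poch_X_pow_eq_qfac]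
  simp only [map_mul]
  ring

theorem exists_pochRatio_eq_div {n N d a b : ℕ} (hN : N = 4 * a + 1) (hd : d = 4 * b + 1)
    (hnd : n * d = N) :
    ∃ P Q : ℚ[X], ¬ cyclotomic N ℚ ∣ Q ∧
      pochRatio n (2 * a) (2 * b) =
        algebraMap ℚ[X] (RatFunc ℚ) P / algebraMap ℚ[X] (RatFunc ℚ) Q := by
  have hN0 : 0 < N := by omega
  have hn : 0 < n := Nat.pos_of_mul_pos_right (hnd ▸ hN0)
  refine ⟨qfac 3 1 (range (2 * a)) * qfac 1 n ((range (2 * b + 1)).erase b),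
    qfac 1 1 ((range (2 * a + 1)).erase a) * qfac 3 n (range (2 * b)), ?_, ?_⟩
  · rw [(cyclotomic.irreducible_rat hN0).prime.dvd_mul, cyclotomic_dvd_qfac_iff hN0,
      cyclotomic_dvd_qfac_iff hN0]
    rintro (⟨i, hi, hdvd⟩ | ⟨i, hi, hdvd⟩)
    · rw [mem_erase, mem_range] at hi
      have := Nat.eq_of_dvd_of_lt_two_mul (by omega) hdvd (by omega)
      omega
    · rw [mem_range] at hi
      rw [← hnd, Nat.mul_dvd_mul_iff_left hn] at hdvd
      have := Nat.eq_of_dvd_of_lt_two_mul (by omega) hdvd (by omega)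
      omega
  · have hw : (1 - X ^ N : ℚ[X]) ≠ 0 := one_sub_X_pow_ne_zero hN0
    have hnum : (1 - X ^ n) * qfac 3 1 (range (2 * a)) * qfac 5 n (range (2 * b)) =
        (1 - X ^ N) * (qfac 3 1 (range (2 * a)) * qfac 1 n ((range (2 * b + 1)).erase b)) := by
      rw [mul_right_comm, one_sub_X_pow_mul_qfac_five, qfac_one_eq_mul_erase hd, hnd]
      ring
    have hden : (1 - X) * (qfac 5 1 (range (2 * a)) * qfac 3 n (range (2 * b))) =
        (1 - X ^ N) * (qfac 1 1 ((range (2 * a + 1)).erase a) * qfac 3 n (range (2 * b))) := by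
      have h := one_sub_X_pow_mul_qfac_five 1 (2 * a)
      rw [pow_one] at h
      rw [← mul_assoc, h, qfac_one_eq_mul_erase hN, one_mul, mul_assoc]
    rw [pochRatio_eq, hnum, hden, map_mul _ (1 - X ^ N), map_mul _ (1 - X ^ N),
      mul_div_mul_left _ _ (RatFunc.algebraMap_ne_zero hw)]

theorem pochRatio_add_eq_mul {n N d a b : ℕ} (hN : N = 4 * a + 1) (hd : d = 4 * b + 1)
    (hnd : n * d = N) (K : ℕ) :
    pochRatio n (2 * a + K * N) (2 * b + K * d) =
      pochRatio n (2 * a) (2 * b) *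
        (algebraMap ℚ[X] (RatFunc ℚ) (qtail 3 1 N (2 * a) K * qtail 5 n d (2 * b) K) /
          algebraMap ℚ[X] (RatFunc ℚ) (qtail 5 1 N (2 * a) K * qtail 3 n d (2 * b) K)) := by
  set Z : ℕ → ℚ[X] := fun c => ∏ u ∈ range K, (1 - X ^ (N * (c + 4 * u)))
  have hZ : Z 3 * Z 5 ≠ 0 := mul_ne_zero
    (prod_ne_zero_iff.2 fun _ _ => one_sub_X_pow_ne_zero (Nat.mul_pos (by omega) (by omega)))
    (prod_ne_zero_iff.2 fun _ _ => one_sub_X_pow_ne_zero (Nat.mul_pos (by omega) (by omega)))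
  have hnum :
      (1 - X ^ n) * qfac 3 1 (range (2 * a + K * N)) * qfac 5 n (range (2 * b + K * d)) =
      Z 3 * Z 5 * ((1 - X ^ n) * qfac 3 1 (range (2 * a)) * qfac 5 n (range (2 * b)) *
        (qtail 3 1 N (2 * a) K * qtail 5 n d (2 * b) K)) := by
    rw [qfac_range_add, qfac_range_add,
      qfac_Ico_eq_mul hN (one_mul N) (by norm_num) (by norm_num),
      qfac_Ico_eq_mul hd hnd (by norm_num) (by norm_num)]
    ring
  have hden :
      (1 - X) * (qfac 5 1 (range (2 * a + K * N)) * qfac 3 n (range (2 * b + K * d))) =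
      Z 3 * Z 5 * ((1 - X) * (qfac 5 1 (range (2 * a)) * qfac 3 n (range (2 * b))) *
        (qtail 5 1 N (2 * a) K * qtail 3 n d (2 * b) K)) := by
    rw [qfac_range_add, qfac_range_add,
      qfac_Ico_eq_mul hN (one_mul N) (by norm_num) (by norm_num),
      qfac_Ico_eq_mul hd hnd (by norm_num) (by norm_num)]
    ring
  rw [pochRatio_eq, pochRatio_eq, hnum, hden, map_mul _ (Z 3 * Z 5), map_mul _ (Z 3 * Z 5),
    mul_div_mul_left _ _ (RatFunc.algebraMap_ne_zero hZ)]
  simp only [map_mul]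
  ring

theorem dvd_num_div_mul_div_sub_div {K : Type*} [Field K] {Φ P Q U V : K[X]} (hΦ : Prime Φ)
    (hQ : ¬ Φ ∣ Q) (hV : ¬ Φ ∣ V) (hUV : Φ ∣ U - V) :
    Φ ∣ (algebraMap K[X] (RatFunc K) P / algebraMap K[X] (RatFunc K) Q *
        (algebraMap K[X] (RatFunc K) U / algebraMap K[X] (RatFunc K) V) -
      algebraMap K[X] (RatFunc K) P / algebraMap K[X] (RatFunc K) Q).num := by
  have hQV : Q * V ≠ 0 :=
    mul_ne_zero (fun h => hQ (h ▸ dvd_zero Φ)) (fun h => hV (h ▸ dvd_zero Φ))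
  have hQ0 := RatFunc.algebraMap_ne_zero (left_ne_zero_of_mul hQV)
  have hV0 := RatFunc.algebraMap_ne_zero (right_ne_zero_of_mul hQV)
  set x := algebraMap K[X] (RatFunc K) P / algebraMap K[X] (RatFunc K) Q *
      (algebraMap K[X] (RatFunc K) U / algebraMap K[X] (RatFunc K) V) -
    algebraMap K[X] (RatFunc K) P / algebraMap K[X] (RatFunc K) Q
  have hx :
      x = algebraMap K[X] (RatFunc K) (P * (U - V)) / algebraMap K[X] (RatFunc K) (Q * V) := by
    simp only [x, map_mul, map_sub]
    field_simp
  have hdvd : Φ ∣ x.num * (Q * V) :=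
    (RatFunc.num_mul_eq_mul_denom_iff hQV).2 hx ▸ (hUV.mul_left P).mul_right _
  exact (hΦ.dvd_or_dvd hdvd).resolve_right (hΦ.not_dvd_mul hQ hV)

theorem cyclotomic_dvd_num_pochRatio_add_sub {n N d a b : ℕ} (hN : N = 4 * a + 1)
    (hd : d = 4 * b + 1) (hnd : n * d = N) (K : ℕ) :
    cyclotomic N ℚ ∣
      (pochRatio n (2 * a + K * N) (2 * b + K * d) - pochRatio n (2 * a) (2 * b)).num := by
  have hN0 : 0 < N := by omega
  have hζ := Complex.isPrimitiveRoot_exp N hN0.ne'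
  obtain ⟨P, Q, hQ, hPQ⟩ := exists_pochRatio_eq_div hN hd hnd
  rw [pochRatio_add_eq_mul hN hd hnd, hPQ]
  refine dvd_num_div_mul_div_sub_div (cyclotomic.irreducible_rat hN0).prime hQ ?_ ?_
  · exact (cyclotomic.irreducible_rat hN0).prime.not_dvd_mul
      (cyclotomic_not_dvd_qtail (one_mul N) hN0) (cyclotomic_not_dvd_qtail hnd hN0)
  · rw [cyclotomic_dvd_iff_aeval_eq_zero hζ hN0, map_sub, map_mul, map_mul,
      aeval_qtail_three_eq_five (by rw [pow_one, hζ.pow_eq_one])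
        (by omega : N = 2 * (2 * a) + 1),
      aeval_qtail_three_eq_five (by rw [← pow_mul, hnd, hζ.pow_eq_one])
        (by omega : d = 2 * (2 * b) + 1)]
    ring

theorem stmt11_general (n r s : ℕ) (hn4 : n % 4 = 1) (hs : 0 < s) (hrs : s < r) :
    (Polynomial.cyclotomic (n ^ s) ℚ) ∣
      (qint n * poch (RatFunc.X ^ 3) (RatFunc.X ^ 4) ((n ^ r - 1) / 2)
          * poch (RatFunc.X ^ (5 * n)) (RatFunc.X ^ (4 * n)) ((n ^ (r - 1) - 1) / 2)
          / (poch (RatFunc.X ^ 5) (RatFunc.X ^ 4) ((n ^ r - 1) / 2)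
            * poch (RatFunc.X ^ (3 * n)) (RatFunc.X ^ (4 * n)) ((n ^ (r - 1) - 1) / 2))
        - qint n * poch (RatFunc.X ^ 3) (RatFunc.X ^ 4) ((n ^ s - 1) / 2)
          * poch (RatFunc.X ^ (5 * n)) (RatFunc.X ^ (4 * n)) ((n ^ (s - 1) - 1) / 2)
          / (poch (RatFunc.X ^ 5) (RatFunc.X ^ 4) ((n ^ s - 1) / 2)
            * poch (RatFunc.X ^ (3 * n)) (RatFunc.X ^ (4 * n)) ((n ^ (s - 1) - 1) / 2))).num := by
  have hpow : ∀ j, n ^ j % 4 = 1 := fun j => by simp [Nat.pow_mod, hn4]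
  obtain ⟨a, ha⟩ : ∃ a, n ^ s = 4 * a + 1 := ⟨n ^ s / 4, by have := hpow s; omega⟩
  obtain ⟨b, hb⟩ : ∃ b, n ^ (s - 1) = 4 * b + 1 :=
    ⟨n ^ (s - 1) / 4, by have := hpow (s - 1); omega⟩
  obtain ⟨K, hK⟩ : ∃ K, n ^ (r - s) = 2 * K + 1 :=
    ⟨n ^ (r - s) / 2, by have := hpow (r - s); omega⟩
  have hnd : n * n ^ (s - 1) = n ^ s := by rw [← pow_succ', Nat.sub_add_cancel hs]
  have hsplit : ∀ j c, n ^ j = 4 * c + 1 → (n ^ (j + (r - s)) - 1) / 2 = 2 * c + K * n ^ j :=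
    fun j c hc => by
      rw [pow_add, hK, hc,
        show (4 * c + 1) * (2 * K + 1) = 2 * (2 * c + K * (4 * c + 1)) + 1 by ring]
      omega
  rw [show r = s + (r - s) by omega, show s + (r - s) - 1 = s - 1 + (r - s) by omega,
    hsplit s a ha, hsplit (s - 1) b hb, ha, hb, show (4 * a + 1 - 1) / 2 = 2 * a by omega,
    show (4 * b + 1 - 1) / 2 = 2 * b by omega]
  exact cyclotomic_dvd_num_pochRatio_add_sub rfl rfl (ha ▸ hb ▸ hnd) K

/-- for `n ≡ 1 (mod 4)`, `n > 1`, and `r > s ≥ 1`, modulo `Φ_{nˢ}(q)`: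
`[n]·(q³;q⁴)_{(nʳ-1)/2}(q⁵ⁿ;q⁴ⁿ)_{(nʳ⁻¹-1)/2}/((q⁵;q⁴)_{(nʳ-1)/2}(q³ⁿ;q⁴ⁿ)_{(nʳ⁻¹-1)/2})
≡ [n]·(q³;q⁴)_{(nˢ-1)/2}(q⁵ⁿ;q⁴ⁿ)_{(nˢ⁻¹-1)/2}/((q⁵;q⁴)_{(nˢ-1)/2}(q³ⁿ;q⁴ⁿ)_{(nˢ⁻¹-1)/2})`. -/
theorem stmt11 (n r s : ℕ) (hn : 1 < n) (hn4 : n % 4 = 1) (hs : 0 < s) (hrs : s < r) :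
    (Polynomial.cyclotomic (n ^ s) ℚ) ∣
      (qint n * poch (RatFunc.X ^ 3) (RatFunc.X ^ 4) ((n ^ r - 1) / 2)
          * poch (RatFunc.X ^ (5 * n)) (RatFunc.X ^ (4 * n)) ((n ^ (r - 1) - 1) / 2)
          / (poch (RatFunc.X ^ 5) (RatFunc.X ^ 4) ((n ^ r - 1) / 2)
            * poch (RatFunc.X ^ (3 * n)) (RatFunc.X ^ (4 * n)) ((n ^ (r - 1) - 1) / 2))
        - qint n * poch (RatFunc.X ^ 3) (RatFunc.X ^ 4) ((n ^ s - 1) / 2)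
          * poch (RatFunc.X ^ (5 * n)) (RatFunc.X ^ (4 * n)) ((n ^ (s - 1) - 1) / 2)
          / (poch (RatFunc.X ^ 5) (RatFunc.X ^ 4) ((n ^ s - 1) / 2)
            * poch (RatFunc.X ^ (3 * n)) (RatFunc.X ^ (4 * n)) ((n ^ (s - 1) - 1) / 2))).num :=
  stmt11_general n r s hn4 hs hrs
end

section
/- Let m and n be positive integers with n odd. Then ∑_{k=0}^{mn-1} q^k/(-q;q)_k · C(2k,k)_q ≡ (-1)^{(n-1)/2} q^{(n^2-1)/4} · ∑_{k=0}^{m-1} (1/2^k) C(2k,k) modulo Φ_n(q), where C(2k,k)_q is the Gaussian binomial coefficient and C(2k,k) is the ordinary central binomial coefficient (the rational constant on the right having denominator a power of 2, coprime to Φ_n(q) after reduction for odd n). -/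
open Finset Polynomial

/-- The Gaussian binomial coefficient `C(M,N)_q` in `ℚ(q)`. -/
noncomputable def qbinom (M N : ℕ) : RatFunc ℚ :=
  if N ≤ M then
    poch RatFunc.X RatFunc.X M / (poch RatFunc.X RatFunc.X N * poch RatFunc.X RatFunc.X (M - N))
  else 0

/-!
Let `t_k = q^k (q;q²)_k / (q;q)_k` be the `k`-th summand, so `t_{k+1} = t_k ρ_k` with
`ρ_k = q (1 - q^{2k+1}) / (1 - q^{k+1})`, and let `ζ` be a primitive `n`-th root of unity,
`n = 2M + 1`. For `i + 1 < n` the factor `ρ_{na+i}` is regular at `ζ` with value `ρ_i(ζ)`. In a full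
block `ρ_{na} ⋯ ρ_{na+n-1}` one numerator and one denominator factor vanish at `ζ`; their quotient
`(1 - q^{n(2a+1)}) / (1 - q^{n(a+1)})` has value `(2a+1)/(a+1)`, and the other factors cancel.
Hence `t_{na+r}(ζ) = C(2a,a)/2^a · t_r(ζ)` for `r < n`, and the sum factors as
`(∑_{a<m} C(2a,a)/2^a) · ∑_{r<n} t_r(ζ)`. The terms with `r > M` vanish, and
`∑_{r≤M} t_r(ζ) = (-1)^M ζ^{M(M+1)}` follows from `∑_r [M,r] q^{r(r-1)} c^r (cq^r;q)_{M-r} = 1`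
at `c = -ζ`, after substituting `r ↦ M - r` and `ζ^{2i+1} = ζ^{-2(M-i)}`. So the difference of the
two sides is regular at `ζ` with value `0`, and `Φ_n = minpoly ζ` divides its numerator.
-/

section HasValueAt

variable {F K : Type*} [Field F] [Field K] [Algebra F K]

def RatFunc.HasValueAt (ζ : K) (f : RatFunc F) (v : K) : Prop :=
  ∃ p d : F[X], aeval ζ d ≠ 0 ∧
    f = algebraMap F[X] (RatFunc F) p / algebraMap F[X] (RatFunc F) d ∧
    v = aeval ζ p / aeval ζ d

variable {ζ : K} {f g : RatFunc F} {v w : K}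

lemma RatFunc.hasValueAt_algebraMap (p : F[X]) :
    RatFunc.HasValueAt ζ (algebraMap F[X] (RatFunc F) p) (aeval ζ p) :=
  ⟨p, 1, by simp, by simp, by simp⟩

lemma RatFunc.hasValueAt_algebraMap_div {p d : F[X]} (hd : aeval ζ d ≠ 0) :
    RatFunc.HasValueAt ζ (algebraMap F[X] (RatFunc F) p / algebraMap F[X] (RatFunc F) d)
      (aeval ζ p / aeval ζ d) :=
  ⟨p, d, hd, rfl, rfl⟩

lemma RatFunc.hasValueAt_mul_div_mul {c p d : F[X]} (hc : c ≠ 0) (hd : aeval ζ d ≠ 0) :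
    RatFunc.HasValueAt ζ
      (algebraMap F[X] (RatFunc F) (c * p) / algebraMap F[X] (RatFunc F) (c * d))
      (aeval ζ p / aeval ζ d) := by
  rw [map_mul, map_mul, mul_div_mul_left _ _ (algebraMap_ne_zero hc)]
  exact hasValueAt_algebraMap_div hd

lemma RatFunc.hasValueAt_one : RatFunc.HasValueAt ζ (1 : RatFunc F) 1 := by
  simpa using hasValueAt_algebraMap (ζ := ζ) (1 : F[X])

lemma RatFunc.hasValueAt_X : RatFunc.HasValueAt ζ (RatFunc.X : RatFunc F) ζ := by
  simpa using hasValueAt_algebraMap (ζ := ζ) (Polynomial.X : F[X])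

lemma RatFunc.hasValueAt_C (c : F) :
    RatFunc.HasValueAt ζ (RatFunc.C c : RatFunc F) (algebraMap F K c) := by
  simpa using hasValueAt_algebraMap (ζ := ζ) (Polynomial.C c)

lemma RatFunc.HasValueAt.mul (hf : RatFunc.HasValueAt ζ f v) (hg : RatFunc.HasValueAt ζ g w) :
    RatFunc.HasValueAt ζ (f * g) (v * w) := by
  obtain ⟨p, d, hd, rfl, rfl⟩ := hf
  obtain ⟨p', d', hd', rfl, rfl⟩ := hg
  exact ⟨p * p', d * d', by simpa using mul_ne_zero hd hd', by simp [div_mul_div_comm],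
    by simp [div_mul_div_comm]⟩

lemma RatFunc.HasValueAt.add (hf : RatFunc.HasValueAt ζ f v) (hg : RatFunc.HasValueAt ζ g w) :
    RatFunc.HasValueAt ζ (f + g) (v + w) := by
  obtain ⟨p, d, hd, rfl, rfl⟩ := hf
  obtain ⟨p', d', hd', rfl, rfl⟩ := hg
  have hd₀ : d ≠ 0 := fun h => hd (by simp [h])
  have hd₀' : d' ≠ 0 := fun h => hd' (by simp [h])
  refine ⟨p * d' + d * p', d * d', by simpa using mul_ne_zero hd hd', ?_, ?_⟩
  · rw [div_add_div _ _ (algebraMap_ne_zero hd₀) (algebraMap_ne_zero hd₀')]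
    simp
  · rw [div_add_div _ _ hd hd']
    simp

lemma RatFunc.HasValueAt.neg (hf : RatFunc.HasValueAt ζ f v) :
    RatFunc.HasValueAt ζ (-f) (-v) := by
  obtain ⟨p, d, hd, rfl, rfl⟩ := hf
  exact ⟨-p, d, hd, by simp [neg_div], by simp [neg_div]⟩

lemma RatFunc.HasValueAt.sub (hf : RatFunc.HasValueAt ζ f v) (hg : RatFunc.HasValueAt ζ g w) :
    RatFunc.HasValueAt ζ (f - g) (v - w) := by
  simpa [sub_eq_add_neg] using hf.add hg.neg

lemma RatFunc.HasValueAt.inv (hf : RatFunc.HasValueAt ζ f v) (hv : v ≠ 0) :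
    RatFunc.HasValueAt ζ f⁻¹ v⁻¹ := by
  obtain ⟨p, d, hd, rfl, rfl⟩ := hf
  exact ⟨d, p, left_ne_zero_of_mul (by simpa [div_eq_mul_inv] using hv), by simp, by simp⟩

lemma RatFunc.HasValueAt.div (hf : RatFunc.HasValueAt ζ f v) (hg : RatFunc.HasValueAt ζ g w)
    (hw : w ≠ 0) : RatFunc.HasValueAt ζ (f / g) (v / w) := by
  simpa [div_eq_mul_inv] using hf.mul (hg.inv hw)

lemma RatFunc.HasValueAt.pow (hf : RatFunc.HasValueAt ζ f v) (k : ℕ) :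
    RatFunc.HasValueAt ζ (f ^ k) (v ^ k) := by
  induction k with
  | zero => simpa using hasValueAt_one
  | succ k ih => simpa [pow_succ] using ih.mul hf

lemma RatFunc.HasValueAt.prod {ι : Type*} (s : Finset ι) {f : ι → RatFunc F} {v : ι → K}
    (h : ∀ i ∈ s, RatFunc.HasValueAt ζ (f i) (v i)) :
    RatFunc.HasValueAt ζ (∏ i ∈ s, f i) (∏ i ∈ s, v i) := by
  classical
  induction s using Finset.induction_on with
  | empty => simpa using hasValueAt_one
  | insert i s hi ih =>
    rw [prod_insert hi, prod_insert hi]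
    exact (h i (mem_insert_self i s)).mul (ih fun j hj => h j (mem_insert_of_mem hj))

lemma RatFunc.HasValueAt.sum {ι : Type*} (s : Finset ι) {f : ι → RatFunc F} {v : ι → K}
    (h : ∀ i ∈ s, RatFunc.HasValueAt ζ (f i) (v i)) :
    RatFunc.HasValueAt ζ (∑ i ∈ s, f i) (∑ i ∈ s, v i) := by
  classical
  induction s using Finset.induction_on with
  | empty => simpa using hasValueAt_algebraMap (ζ := ζ) (0 : F[X])
  | insert i s hi ih =>
    rw [sum_insert hi, sum_insert hi]
    exact (h i (mem_insert_self i s)).add (ih fun j hj => h j (mem_insert_of_mem hj))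

lemma RatFunc.HasValueAt.minpoly_dvd_num (h : RatFunc.HasValueAt ζ f 0) (hζ : IsIntegral F ζ) :
    minpoly F ζ ∣ f.num := by
  obtain ⟨p, d, hd, rfl, hv⟩ := h
  have hp : minpoly F ζ ∣ p := minpoly.dvd F ζ (by simpa [hd] using hv.symm)
  have hnum := (num_mul_eq_mul_denom_iff (x := algebraMap F[X] (RatFunc F) p /
    algebraMap F[X] (RatFunc F) d) (fun h => hd (by simp [h]))).mpr rfl
  refine ((minpoly.irreducible hζ).prime.dvd_or_dvd
    (hnum ▸ dvd_mul_of_dvd_left hp _)).resolve_right ?_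
  exact fun hdvd => hd (minpoly.dvd_iff.mp hdvd)

end HasValueAt

lemma mul_sub_one_add_self (s : ℕ) : s * (s - 1) + s = s * s := by
  rw [Nat.mul_sub_one, Nat.sub_add_cancel (Nat.le_mul_self s)]

lemma sum_range_mul_eq_sum_sum {A : Type*} [AddCommMonoid A] (f : ℕ → A) (m n : ℕ) :
    ∑ k ∈ range (m * n), f k = ∑ a ∈ range m, ∑ r ∈ range n, f (n * a + r) := by
  induction m with
  | zero => simp
  | succ m ih => rw [add_mul, one_mul, sum_range_add, ih, sum_range_succ, mul_comm]

section QBinomial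

variable {R : Type*} [CommRing R] (q : R)

def qFactorial (k : ℕ) : R := ∏ i ∈ range k, (1 - q ^ (i + 1))

def qBinom : ℕ → ℕ → R
  | _, 0 => 1
  | 0, _ + 1 => 0
  | M + 1, r + 1 => q ^ (r + 1) * qBinom M (r + 1) + qBinom M r

@[simp] lemma qBinom_zero_right (M : ℕ) : qBinom q M 0 = 1 := by cases M <;> rfl

lemma qBinom_succ_succ (M r : ℕ) :
    qBinom q (M + 1) (r + 1) = q ^ (r + 1) * qBinom q M (r + 1) + qBinom q M r := rfl

lemma qBinom_eq_zero_of_lt : ∀ {M r : ℕ}, M < r → qBinom q M r = 0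
  | 0, _ + 1, _ => rfl
  | M + 1, r + 1, h => by
    rw [qBinom_succ_succ, qBinom_eq_zero_of_lt (by omega), qBinom_eq_zero_of_lt (by omega)]
    ring

@[simp] lemma qBinom_self : ∀ M : ℕ, qBinom q M M = 1
  | 0 => rfl
  | M + 1 => by rw [qBinom_succ_succ, qBinom_eq_zero_of_lt q M.lt_succ_self, qBinom_self M]; ring

lemma qFactorial_succ (k : ℕ) : qFactorial q (k + 1) = qFactorial q k * (1 - q ^ (k + 1)) :=
  prod_range_succ _ k

lemma qFactorial_add (a b : ℕ) :
    qFactorial q (a + b) = qFactorial q a * ∏ i ∈ range b, (1 - q ^ (a + i + 1)) :=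
  prod_range_add _ a b

lemma qFactorial_two_mul (k : ℕ) : qFactorial q (2 * k)
    = (∏ i ∈ range k, (1 - q ^ (2 * i + 1))) * ∏ i ∈ range k, (1 - q ^ (2 * (i + 1))) := by
  induction k with
  | zero => simp [qFactorial]
  | succ k ih =>
    rw [show 2 * (k + 1) = 2 * k + 1 + 1 by ring, qFactorial_succ, qFactorial_succ, ih,
      prod_range_succ, prod_range_succ]
    ring

lemma qBinom_add_mul_qFactorial_mul_qFactorial :
    ∀ r s : ℕ, qBinom q (r + s) r * qFactorial q r * qFactorial q s = qFactorial q (r + s)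
  | 0, s => by simp [qFactorial]
  | r + 1, 0 => by simp [qFactorial]
  | r + 1, s + 1 => by
    have h₁ := qBinom_add_mul_qFactorial_mul_qFactorial (r + 1) s
    have h₂ : qBinom q (r + 1 + s) r * qFactorial q r * qFactorial q (s + 1)
        = qFactorial q (r + 1 + s) := by
      simpa only [Nat.add_right_comm, Nat.add_assoc] using
        qBinom_add_mul_qFactorial_mul_qFactorial r (s + 1)
    rw [show r + 1 + (s + 1) = r + 1 + s + 1 by omega, qBinom_succ_succ,
      qFactorial_succ q (r + 1 + s), qFactorial_succ q s, qFactorial_succ q r]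
    rw [qFactorial_succ q r] at h₁
    rw [qFactorial_succ q s] at h₂
    linear_combination (q ^ (r + 1) * (1 - q ^ (s + 1))) * h₁ + (1 - q ^ (r + 1)) * h₂

/-- A `q`-analogue of `∑_r C(M,r) c^r (1-c)^(M-r) = 1`. -/
theorem sum_qBinom_mul_prod_eq_one : ∀ (M : ℕ) (c : R),
    ∑ r ∈ range (M + 1),
      qBinom q M r * q ^ (r * (r - 1)) * c ^ r * ∏ i ∈ range (M - r), (1 - c * q ^ (r + i)) = 1
  | 0, c => by simp
  | M + 1, c => by
    -- `B` is the summand for `(M, c q)`; after q-Pascal, the sum for `(M + 1, c)` regroups as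
    -- `∑_r (B r (1 - c q^r) + c q^r B r)`.
    set B : ℕ → R := fun r =>
      qBinom q M r * q ^ (r * r) * c ^ r * ∏ i ∈ range (M - r), (1 - c * q ^ (r + 1 + i))
    have hB : ∑ r ∈ range (M + 1), B r = 1 := by
      rw [← sum_qBinom_mul_prod_eq_one M (c * q)]
      refine sum_congr rfl fun r _ => ?_
      have hprod : ∏ i ∈ range (M - r), (1 - c * q * q ^ (r + i))
          = ∏ i ∈ range (M - r), (1 - c * q ^ (r + 1 + i)) :=
        prod_congr rfl fun i _ => by ring
      rw [hprod, mul_pow]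
      simp only [B, ← mul_sub_one_add_self r, pow_add]
      ring
    have hBtop : B (M + 1) = 0 := by simp [B, qBinom_eq_zero_of_lt q M.lt_succ_self]
    have hstep : ∀ r ∈ range (M + 1),
        qBinom q (M + 1) (r + 1) * q ^ ((r + 1) * (r + 1 - 1)) * c ^ (r + 1) *
            ∏ i ∈ range (M + 1 - (r + 1)), (1 - c * q ^ (r + 1 + i))
          = B (r + 1) * (1 - c * q ^ (r + 1)) + c * q ^ r * B r := by
      intro r hrM
      rw [qBinom_succ_succ, Nat.add_sub_cancel, Nat.add_sub_add_right]
      rcases Nat.lt_or_ge r M with hr | hr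
      · have hprod : ∏ i ∈ range (M - r), (1 - c * q ^ (r + 1 + i)) = (1 - c * q ^ (r + 1)) *
            ∏ i ∈ range (M - (r + 1)), (1 - c * q ^ (r + 1 + 1 + i)) := by
          rw [show M - r = M - (r + 1) + 1 by omega, prod_range_succ']
          simp only [add_zero, ← add_assoc, mul_comm, add_right_comm _ 1]
        simp only [B, hprod]
        ring
      · obtain rfl : r = M := by have := mem_range.mp hrM; omega
        simp [B, qBinom_eq_zero_of_lt q r.lt_succ_self]
        ring
    have hzero : qBinom q (M + 1) 0 * q ^ (0 * (0 - 1)) * c ^ 0 *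
        ∏ i ∈ range (M + 1 - 0), (1 - c * q ^ (0 + i)) = B 0 * (1 - c * q ^ 0) := by
      simp only [B, qBinom_zero_right, Nat.sub_zero, zero_add, pow_zero, mul_one, one_mul,
        zero_mul, prod_range_succ' _ M]
      exact congrArg (· * (1 - c)) (prod_congr rfl fun i _ => by rw [add_comm 1 i])
    rw [sum_range_succ', sum_congr rfl hstep, sum_add_distrib, hzero, add_right_comm,
      ← sum_range_succ' (fun r => B r * (1 - c * q ^ r)), sum_range_succ, hBtop, zero_mul,
      add_zero, ← sum_add_distrib]
    exact (sum_congr rfl fun r _ => by ring).trans hB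

end QBinomial

def termRatio {L : Type*} [Field L] (q : L) (i : ℕ) : L :=
  q * (1 - q ^ (2 * i + 1)) / (1 - q ^ (i + 1))

lemma prod_termRatio {L : Type*} [Field L] (q : L) (r : ℕ) : ∏ i ∈ range r, termRatio q i
    = q ^ r * (∏ i ∈ range r, (1 - q ^ (2 * i + 1))) / qFactorial q r := by
  simp only [termRatio, prod_div_distrib, prod_mul_distrib, prod_const, card_range, qFactorial]

lemma RatFunc.one_sub_X_pow_ne_zero {F : Type*} [Field F] {j : ℕ} (hj : j ≠ 0) :
    (1 : RatFunc F) - RatFunc.X ^ j ≠ 0 := by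
  have h : (1 - Polynomial.X ^ j : F[X]) ≠ 0 := fun h => by
    simpa [hj] using congrArg (Polynomial.eval 0) h
  simpa using algebraMap_ne_zero (K := F) h

lemma RatFunc.one_add_X_pow_ne_zero {F : Type*} [Field F] {j : ℕ} (hj : j ≠ 0) :
    (1 : RatFunc F) + RatFunc.X ^ j ≠ 0 := by
  have h : (1 + Polynomial.X ^ j : F[X]) ≠ 0 := fun h => by
    simpa [hj] using congrArg (Polynomial.eval 0) h
  simpa using algebraMap_ne_zero (K := F) h

lemma summand_eq_prod_termRatio (k : ℕ) :
    RatFunc.X ^ k / poch (-RatFunc.X) RatFunc.X k * qbinom (2 * k) k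
      = ∏ i ∈ range k, termRatio (RatFunc.X : RatFunc ℚ) i := by
  have hpoch : poch RatFunc.X RatFunc.X = qFactorial RatFunc.X := by
    ext k; exact prod_congr rfl fun i _ => by rw [pow_succ']
  have hpochNeg : poch (-RatFunc.X) RatFunc.X k = ∏ i ∈ range k, (1 + RatFunc.X ^ (i + 1)) :=
    prod_congr rfl fun i _ => by ring
  have hsq : ∏ i ∈ range k, (1 - (RatFunc.X : RatFunc ℚ) ^ (2 * (i + 1)))
      = qFactorial RatFunc.X k * ∏ i ∈ range k, (1 + RatFunc.X ^ (i + 1)) := by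
    rw [qFactorial, ← prod_mul_distrib]
    exact prod_congr rfl fun i _ => by ring
  have hfac : qFactorial (RatFunc.X : RatFunc ℚ) k ≠ 0 :=
    prod_ne_zero_iff.mpr fun i _ => RatFunc.one_sub_X_pow_ne_zero i.succ_ne_zero
  have hneg : ∏ i ∈ range k, (1 + (RatFunc.X : RatFunc ℚ) ^ (i + 1)) ≠ 0 :=
    prod_ne_zero_iff.mpr fun i _ => RatFunc.one_add_X_pow_ne_zero i.succ_ne_zero
  rw [qbinom, if_pos (by omega), show 2 * k - k = k by omega, hpoch, hpochNeg,
    qFactorial_two_mul, hsq, prod_termRatio]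
  field_simp

section RootOfUnity

variable {K : Type*} [Field K] {ζ : K} {M n : ℕ}

lemma IsPrimitiveRoot.pow_mul_add (hζ : IsPrimitiveRoot ζ n) (c e : ℕ) :
    ζ ^ (n * c + e) = ζ ^ e := by
  rw [pow_add, pow_mul, hζ.pow_eq_one, one_pow, one_mul]

lemma IsPrimitiveRoot.qFactorial_ne_zero (hζ : IsPrimitiveRoot ζ n) {r : ℕ} (hr : r < n) :
    qFactorial ζ r ≠ 0 :=
  prod_ne_zero_iff.mpr fun i hi => sub_ne_zero.mpr
    (hζ.pow_ne_one_of_pos_of_lt (by omega) (by have := mem_range.mp hi; omega)).symm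

lemma IsPrimitiveRoot.prod_termRatio_eq_zero (hζ : IsPrimitiveRoot ζ (2 * M + 1)) {r : ℕ}
    (hr : M < r) : ∏ i ∈ range r, termRatio ζ i = 0 :=
  prod_eq_zero (mem_range.mpr hr) (by simp [termRatio, hζ.pow_eq_one])

/-- With `M = r + s`, each factor `1 - ζ^(2i+1)` equals `-ζ^(2i+1) (1 - ζ^(2(M-i)))`. -/
lemma pow_mul_prod_one_sub_pow_odd :
    ∀ r s : ℕ, IsPrimitiveRoot ζ (2 * (r + s) + 1) →
      ζ ^ r * ∏ i ∈ range r, (1 - ζ ^ (2 * i + 1))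
        = (-1) ^ (r + s) * ζ ^ ((r + s) * (r + s + 1)) * (ζ ^ (s * (s - 1)) * (-ζ) ^ s)
          * ∏ i ∈ range r, (1 - ζ ^ (2 * (s + i + 1)))
  | 0, s, hζ => by
    have h₁ : ζ ^ (s * (s + 1)) * (ζ ^ (s * (s - 1)) * ζ ^ s) = 1 := by
      rw [← pow_add, ← pow_add, show s * (s + 1) + (s * (s - 1) + s) = (2 * (0 + s) + 1) * s by
        linarith [mul_sub_one_add_self s], pow_mul, hζ.pow_eq_one, one_pow]
    have h₂ : ((-1 : K) ^ s) ^ 2 = 1 := by rw [← pow_mul, mul_comm, pow_mul, neg_one_sq, one_pow]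
    simp only [prod_range_zero, neg_pow ζ, zero_add, pow_zero, mul_one]
    linear_combination (-1 : K) * ((-1) ^ s) ^ 2 * h₁ - h₂
  | r + 1, s, hζ => by
    have ih := pow_mul_prod_one_sub_pow_odd r (s + 1)
      (by rwa [← Nat.add_assoc, Nat.add_right_comm])
    have hexp : ζ ^ ((s + 1) * (s + 1 - 1)) = ζ ^ (s * (s - 1)) * ζ ^ (2 * s) := by
      rw [← pow_add, Nat.add_sub_cancel]
      congr 1
      linarith [mul_sub_one_add_self s]
    have hkey : ζ ^ (2 * r + 1) * ζ ^ (2 * (s + 1)) = 1 := by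
      rw [← pow_add, ← hζ.pow_eq_one]; congr 1; ring
    rw [prod_range_succ, prod_range_succ']
    simp only [show ∀ i, s + (i + 1) + 1 = s + 1 + i + 1 by omega]
    set C : K := (-1) ^ (r + 1 + s) * ζ ^ ((r + 1 + s) * (r + 1 + s + 1))
    set P := ∏ i ∈ range r, (1 - ζ ^ (2 * (s + 1 + i + 1)))
    linear_combination ζ * (1 - ζ ^ (2 * r + 1)) * ih
      + ζ * (1 - ζ ^ (2 * r + 1)) * C * (-ζ) ^ (s + 1) * P * hexp
      + C * ζ ^ (s * (s - 1)) * (-ζ) ^ s * P * hkey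

lemma IsPrimitiveRoot.prod_termRatio_eq (hζ : IsPrimitiveRoot ζ (2 * M + 1)) {r : ℕ}
    (hr : r ≤ M) : ∏ i ∈ range r, termRatio ζ i = (-1) ^ M * ζ ^ (M * (M + 1)) *
      (qBinom ζ M (M - r) * ζ ^ ((M - r) * (M - r - 1)) * (-ζ) ^ (M - r) *
        ∏ i ∈ range (M - (M - r)), (1 - -ζ * ζ ^ (M - r + i))) := by
  obtain ⟨s, rfl⟩ : ∃ s, M = r + s := ⟨M - r, by omega⟩
  rw [show r + s - r = s by omega, show r + s - s = r by omega]
  have hbinom : qBinom ζ (r + s) s * qFactorial ζ r = ∏ i ∈ range r, (1 - ζ ^ (s + i + 1)) := by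
    have h := qBinom_add_mul_qFactorial_mul_qFactorial ζ s r
    rw [qFactorial_add, add_comm s r] at h
    exact mul_left_cancel₀ (hζ.qFactorial_ne_zero (r := s) (by omega)) (by rw [← h]; ring)
  have hsq : ∏ i ∈ range r, (1 - ζ ^ (2 * (s + i + 1)))
      = (∏ i ∈ range r, (1 + ζ ^ (s + i + 1))) * ∏ i ∈ range r, (1 - ζ ^ (s + i + 1)) := by
    rw [← prod_mul_distrib]
    exact prod_congr rfl fun i _ => by ring
  have hneg : ∏ i ∈ range r, (1 - -ζ * ζ ^ (s + i)) = ∏ i ∈ range r, (1 + ζ ^ (s + i + 1)) :=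
    prod_congr rfl fun i _ => by ring
  rw [prod_termRatio, div_eq_iff (hζ.qFactorial_ne_zero (by omega)),
    pow_mul_prod_one_sub_pow_odd r s hζ, hsq, ← hbinom, hneg]
  ring

theorem IsPrimitiveRoot.sum_prod_termRatio (hζ : IsPrimitiveRoot ζ (2 * M + 1)) :
    ∑ r ∈ range (2 * M + 1), ∏ i ∈ range r, termRatio ζ i = (-1) ^ M * ζ ^ (M * (M + 1)) := by
  have htail : ∑ r ∈ range M, ∏ i ∈ range (M + 1 + r), termRatio ζ i = 0 :=
    sum_eq_zero fun r _ => hζ.prod_termRatio_eq_zero (by omega)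
  have hreflect := sum_range_reflect (fun s => qBinom ζ M s * ζ ^ (s * (s - 1)) * (-ζ) ^ s *
    ∏ i ∈ range (M - s), (1 - -ζ * ζ ^ (s + i))) (M + 1)
  simp only [Nat.add_sub_cancel] at hreflect
  rw [show 2 * M + 1 = M + 1 + M by ring, sum_range_add, htail, add_zero,
    sum_congr rfl fun r hr => hζ.prod_termRatio_eq (Nat.lt_succ_iff.mp (mem_range.mp hr)),
    ← mul_sum, hreflect, sum_qBinom_mul_prod_eq_one, mul_one]

lemma RatFunc.hasValueAt_termRatio {F : Type*} [Field F] [Algebra F K] (j : ℕ)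
    (hj : 1 - ζ ^ (j + 1) ≠ 0) :
    RatFunc.HasValueAt ζ (termRatio (RatFunc.X : RatFunc F) j) (termRatio ζ j) :=
  (hasValueAt_X.mul (hasValueAt_one.sub (hasValueAt_X.pow _))).div
    (hasValueAt_one.sub (hasValueAt_X.pow _)) hj

variable [CharZero K]

lemma IsPrimitiveRoot.hasValueAt_termRatio (hζ : IsPrimitiveRoot ζ n) (a : ℕ) {i : ℕ}
    (hi : i + 1 < n) :
    RatFunc.HasValueAt ζ (termRatio (RatFunc.X : RatFunc ℚ) (n * a + i)) (termRatio ζ i) := by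
  have hval : termRatio ζ (n * a + i) = termRatio ζ i := by
    rw [termRatio, termRatio, show 2 * (n * a + i) + 1 = n * (2 * a) + (2 * i + 1) by ring,
      add_assoc, hζ.pow_mul_add, hζ.pow_mul_add]
  refine hval ▸ RatFunc.hasValueAt_termRatio _ ?_
  rw [add_assoc, hζ.pow_mul_add]
  exact sub_ne_zero.mpr (hζ.pow_ne_one_of_pos_of_lt i.succ_ne_zero hi).symm

lemma IsPrimitiveRoot.hasValueAt_one_sub_X_pow_mul_div (hζ : IsPrimitiveRoot ζ n) (hn : n ≠ 0)
    (b : ℕ) {c : ℕ} (hc : c ≠ 0) : RatFunc.HasValueAt ζ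
      (algebraMap ℚ[X] (RatFunc ℚ) (1 - X ^ (n * b)) /
        algebraMap ℚ[X] (RatFunc ℚ) (1 - X ^ (n * c))) (b / c) := by
  have hgeom : ∀ k, aeval ζ (∑ s ∈ range k, (X ^ n : ℚ[X]) ^ s) = k := fun k => by
    simp [hζ.pow_eq_one]
  have hX : (1 - X ^ n : ℚ[X]) ≠ 0 := fun h => by simpa [hn] using congrArg (eval 0) h
  rw [pow_mul, pow_mul, ← mul_neg_geom_sum (X ^ n) b, ← mul_neg_geom_sum (X ^ n) c, ← hgeom b,
    ← hgeom c]
  exact RatFunc.hasValueAt_mul_div_mul hX (by rw [hgeom]; exact_mod_cast hc)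

lemma IsPrimitiveRoot.hasValueAt_prod_termRatio_block (hζ : IsPrimitiveRoot ζ (2 * M + 1))
    (a : ℕ) : RatFunc.HasValueAt ζ
      (∏ i ∈ range (2 * M + 1), termRatio (RatFunc.X : RatFunc ℚ) ((2 * M + 1) * a + i))
      ((2 * a + 1) / (a + 1)) := by
  set n := 2 * M + 1 with hn
  set oddPart : ℚ[X] := ∏ i ∈ range M, (1 - X ^ (2 * (n * a + i) + 1))
  set evenPart : ℚ[X] := ∏ j ∈ range M, (1 - X ^ (2 * (n * a + (M + 1 + j)) + 1))
  set denPart : ℚ[X] := ∏ i ∈ range (2 * M), (1 - X ^ (n * a + i + 1))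
  have heq : ∏ i ∈ range n, termRatio (RatFunc.X : RatFunc ℚ) (n * a + i)
      = algebraMap ℚ[X] (RatFunc ℚ) (X ^ n * ∏ i ∈ range n, (1 - X ^ (2 * (n * a + i) + 1)))
        / algebraMap ℚ[X] (RatFunc ℚ) (∏ i ∈ range n, (1 - X ^ (n * a + i + 1))) := by
    simp [termRatio, prod_div_distrib, prod_mul_distrib, map_prod]
  -- The numerator factor `i = M` and the denominator factor `i = 2M` vanish at `ζ`.
  have hnum : X ^ n * ∏ i ∈ range n, (1 - X ^ (2 * (n * a + i) + 1))
      = X ^ n * (oddPart * evenPart) * (1 - X ^ (n * (2 * a + 1))) := by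
    rw [show range n = range (M + 1 + M) from congrArg range (by omega), prod_range_add,
      prod_range_succ, show 2 * (n * a + M) + 1 = n * (2 * a + 1) by rw [hn]; ring]
    ring
  have hden : ∏ i ∈ range n, (1 - X ^ (n * a + i + 1)) = denPart * (1 - X ^ (n * (a + 1))) := by
    rw [show range n = range (2 * M + 1) from rfl, prod_range_succ,
      show n * a + 2 * M + 1 = n * (a + 1) by rw [hn]; ring]
  have hodd : aeval ζ oddPart = ∏ i ∈ range M, (1 - ζ ^ (2 * i + 1)) := by
    simp only [oddPart, map_prod, map_sub, map_one, map_pow, aeval_X]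
    exact prod_congr rfl fun i _ => by
      rw [show 2 * (n * a + i) + 1 = n * (2 * a) + (2 * i + 1) by ring, hζ.pow_mul_add]
  have heven : aeval ζ evenPart = ∏ j ∈ range M, (1 - ζ ^ (2 * (j + 1))) := by
    simp only [evenPart, map_prod, map_sub, map_one, map_pow, aeval_X]
    exact prod_congr rfl fun j _ => by
      rw [show 2 * (n * a + (M + 1 + j)) + 1 = n * (2 * a + 1) + 2 * (j + 1) by rw [hn]; ring,
        hζ.pow_mul_add]
  have hden_val : aeval ζ denPart = qFactorial ζ (2 * M) := by
    simp only [denPart, map_prod, map_sub, map_one, map_pow, aeval_X, add_assoc, hζ.pow_mul_add]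
    rfl
  have hfac := hζ.qFactorial_ne_zero (r := 2 * M) (by omega)
  rw [heq, hnum, hden, map_mul _ (X ^ n * (oddPart * evenPart)), map_mul _ denPart,
    ← div_mul_div_comm]
  convert (RatFunc.hasValueAt_algebraMap_div (by rwa [hden_val])).mul
    (hζ.hasValueAt_one_sub_X_pow_mul_div (by omega) (2 * a + 1) a.succ_ne_zero) using 1
  rw [qFactorial_two_mul] at hfac
  simp only [map_mul, map_pow, aeval_X, hζ.pow_eq_one, hodd, heven, hden_val, qFactorial_two_mul,
    one_mul, div_self hfac]
  push_cast
  ring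

lemma choose_two_mul_div_two_pow_succ (a : ℕ) :
    ((2 * (a + 1)).choose (a + 1) : K) / 2 ^ (a + 1)
      = ((2 * a).choose a : K) / 2 ^ a * ((2 * a + 1) / (a + 1)) := by
  have h : ((a + 1 : ℕ) : K) * ((2 * (a + 1)).choose (a + 1) : ℕ)
      = 2 * (2 * a + 1) * ((2 * a).choose a : ℕ) := by
    have h := Nat.succ_mul_centralBinom_succ a
    rw [Nat.centralBinom_eq_two_mul_choose, Nat.centralBinom_eq_two_mul_choose] at h
    exact_mod_cast h
  have ha : (a + 1 : K) ≠ 0 := by norm_cast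
  push_cast at h
  field_simp
  linear_combination 2 ^ a * h

lemma IsPrimitiveRoot.hasValueAt_prod_termRatio_mul (hζ : IsPrimitiveRoot ζ (2 * M + 1))
    (a : ℕ) : RatFunc.HasValueAt ζ
      (∏ i ∈ range ((2 * M + 1) * a), termRatio (RatFunc.X : RatFunc ℚ) i)
      (((2 * a).choose a : K) / 2 ^ a) := by
  induction a with
  | zero => simpa using RatFunc.hasValueAt_one
  | succ a ih =>
    rw [mul_add_one, prod_range_add, choose_two_mul_div_two_pow_succ]
    exact ih.mul (hζ.hasValueAt_prod_termRatio_block a)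

lemma IsPrimitiveRoot.hasValueAt_prod_termRatio (hζ : IsPrimitiveRoot ζ (2 * M + 1)) (a : ℕ)
    {r : ℕ} (hr : r < 2 * M + 1) : RatFunc.HasValueAt ζ
      (∏ i ∈ range ((2 * M + 1) * a + r), termRatio (RatFunc.X : RatFunc ℚ) i)
      (((2 * a).choose a : K) / 2 ^ a * ∏ i ∈ range r, termRatio ζ i) := by
  rw [prod_range_add]
  exact (hζ.hasValueAt_prod_termRatio_mul a).mul (RatFunc.HasValueAt.prod _ fun i hi =>
    hζ.hasValueAt_termRatio a (by have := mem_range.mp hi; omega))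

end RootOfUnity

theorem stmt17_general (m n : ℕ) (hodd : Odd n) :
    (Polynomial.cyclotomic n ℚ) ∣
      ((∑ k ∈ Finset.range (m * n),
          RatFunc.X ^ k / poch (-RatFunc.X) RatFunc.X k * qbinom (2 * k) k)
        - (-1) ^ ((n - 1) / 2) * RatFunc.X ^ ((n ^ 2 - 1) / 4)
            * RatFunc.C (∑ k ∈ Finset.range m,
                ((2 * k).choose k : ℚ) / 2 ^ k)).num := by
  obtain ⟨M, rfl⟩ := hodd
  rw [show (2 * M + 1 - 1) / 2 = M by omega,
    show ((2 * M + 1) ^ 2 - 1) / 4 = M * (M + 1) by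
      rw [show (2 * M + 1) ^ 2 - 1 = 4 * (M * (M + 1)) from Nat.sub_eq_of_eq_add (by ring),
        Nat.mul_div_cancel_left _ (by norm_num)]]
  have hζ := Complex.isPrimitiveRoot_exp (2 * M + 1) (by omega)
  set ζ := Complex.exp (2 * Real.pi * Complex.I / ↑(2 * M + 1))
  rw [cyclotomic_eq_minpoly_rat hζ (by omega)]
  refine RatFunc.HasValueAt.minpoly_dvd_num ?_ (hζ.isIntegral (by omega)).tower_top
  set c : ℚ := ∑ k ∈ range m, ((2 * k).choose k : ℚ) / 2 ^ k
  have hlhs := RatFunc.HasValueAt.sum (ζ := ζ) (range m) fun a _ =>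
    RatFunc.HasValueAt.sum (range (2 * M + 1)) fun r hr =>
      hζ.hasValueAt_prod_termRatio a (mem_range.mp hr)
  rw [← sum_mul_sum, hζ.sum_prod_termRatio] at hlhs
  have hrhs := ((RatFunc.hasValueAt_one.neg.pow M).mul
    (RatFunc.hasValueAt_X.pow (M * (M + 1)))).mul (RatFunc.hasValueAt_C (ζ := ζ) c)
  simp only [summand_eq_prod_termRatio]
  rw [sum_range_mul_eq_sum_sum]
  convert hlhs.sub hrhs using 1
  simp [c]
  ring

/-- for positive `m` and odd positive `n`, modulo `Φ_n(q)`: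
`∑_{k=0}^{mn-1} q^k/(-q;q)_k · C(2k,k)_q
 ≡ (-1)^{(n-1)/2} q^{(n²-1)/4} ∑_{k=0}^{m-1} (1/2^k)·C(2k,k)`. -/
theorem stmt17 (m n : ℕ) (hm : 0 < m) (hn : 0 < n) (hodd : Odd n) :
    (Polynomial.cyclotomic n ℚ) ∣
      ((∑ k ∈ Finset.range (m * n),
          RatFunc.X ^ k / poch (-RatFunc.X) RatFunc.X k * qbinom (2 * k) k)
        - (-1) ^ ((n - 1) / 2) * RatFunc.X ^ ((n ^ 2 - 1) / 4)
            * RatFunc.C (∑ k ∈ Finset.range m,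
                ((2 * k).choose k : ℚ) / 2 ^ k)).num :=
  stmt17_general m n hodd
end
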